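/- arXiv:1701.02525 — 2 statements merged into one kernel-verified Lean document; each statement's English description precedes it below -/
import Mathlib

section
/- Let p be prime, 0 ≤ w < m, and let ℓ be a nonzero polynomial over F_p of degree < m - w with e(ℓ) = k, where e(ℓ) is the exact power of x dividing ℓ and k ≤ m - w - 1. Then Y_{p^m,w}(ℓ, x^m) := Σ_{g ∈ G_{p,m-w}(x^m)} Σ_{h ∈ G_{p,m}\{0}} r_p(h) X_p((ℓ/x^{m-w}) h g) = -((p²-1)/(3p)) p^k. -/
open Polynomial Finset
open scoped Classical

/-- The set `G_{p,m}` of polynomials over `F_p` of degree `< m`. -/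
noncomputable def Gset (p m : ℕ) [NeZero p] : Finset (Polynomial (ZMod p)) :=
  (Finset.univ : Finset (Fin m → ZMod p)).image
    (fun c => ∑ i : Fin m, Polynomial.C (c i) * Polynomial.X ^ (i : ℕ))

/-- `r_p(h) = 1/(p^{a+1} sin²(π h_a/p))` for `h` of degree `a` with leading coefficient `h_a`. -/
noncomputable def rp (p : ℕ) (h : Polynomial (ZMod p)) : ℝ :=
  1 / ((p : ℝ) ^ (h.natDegree + 1) * Real.sin (Real.pi * (h.leadingCoeff.val : ℝ) / p) ^ 2)

/-- `r_p(h,γ) = 1+γ` if `h = 0` and `γ r_p(h)` otherwise. -/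
noncomputable def rpw (p : ℕ) (h : Polynomial (ZMod p)) (γ : ℝ) : ℝ :=
  if h = 0 then 1 + γ else γ * rp p h

/-- The expansion of a rational function over `F_p` as a formal Laurent series in `x⁻¹`:
we substitute `x ↦ t⁻¹` where `t` is the variable of `LaurentSeries (ZMod p)`, so that the
coefficient of `x^{-l}` is the coefficient of `t^l`. -/
noncomputable def laurentAtInfty (p : ℕ) [Fact p.Prime] (q : RatFunc (ZMod p)) :
    LaurentSeries (ZMod p) :=
  RatFunc.eval (HahnSeries.C : ZMod p →+* LaurentSeries (ZMod p))
    (HahnSeries.single (-1 : ℤ) (1 : ZMod p)) q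

/-- `X_p(L) = e^{2πi c_{-1}(L)/p}`, where `c_{-1}(L)` is the coefficient of `x⁻¹` of the
Laurent series expansion in `x⁻¹` of the rational function `q`. -/
noncomputable def Xp (p : ℕ) [Fact p.Prime] (q : RatFunc (ZMod p)) : ℂ :=
  Complex.exp (2 * Real.pi * Complex.I * (((laurentAtInfty p q).coeff 1).val : ℂ) / p)

/-! Write `n = m - w`. Since `X_p((ℓ / x^n) h g) = e_p(c_{n-1}(ℓ h g))`, the sum over `g` is the
sum of an additive character composed with a linear functional over `G_{p,n}`, minus the same
sum over `x G_{p,n-1}` (the `g` divisible by `x`). Such a sum is `p^{dim}` if the functional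
vanishes and `0` otherwise, so the inner sum is `p^n [x^n ∣ ℓ h] - p^{n-1} [x^{n-1} ∣ ℓ h]`,
which is `p^n [x^{j+1} ∣ h] - p^{n-1} [x^j ∣ h]` with `j = n - 1 - k` because `x^k ∥ ℓ`.

On the other side, `r_p(x^j h) = r_p(h) / p^j`, and the polynomials of degree exactly `a`
contribute `p^a · p^{-(a+1)} · ∑_{c ≠ 0} csc²(π c / p) = (p² - 1) / (3p)` to the sum of `r_p`;
the cosecant sum comes from Parseval applied to `F(b) = ∑_{x < p} x e_p(b x) = p / (e_p(b) - 1)`.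
The two terms then differ by a single degree level, which leaves `-(p² - 1) / (3p) · p^k`. -/

open Real

section CosecantSum

variable {N : ℕ} [NeZero N]

lemma stdAddChar_mul_natCast (b : ZMod N) (x : ℕ) :
    ZMod.stdAddChar (b * (x : ZMod N)) = ZMod.stdAddChar b ^ x := by
  rw [mul_comm, ← nsmul_eq_mul, AddChar.map_nsmul_eq_pow]

lemma norm_stdAddChar_sub_one_sq (b : ZMod N) :
    ‖ZMod.stdAddChar b - 1‖ ^ 2 = 4 * sin (π * b.val / N) ^ 2 := by
  rw [ZMod.stdAddChar_apply, ZMod.toCircle_apply,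
    show 2 * (π : ℂ) * Complex.I * b.val / N = Complex.I * ((2 * π * b.val / N : ℝ) : ℂ) by
      push_cast; ring,
    Complex.norm_exp_I_mul_ofReal_sub_one, Real.norm_eq_abs, sq_abs]
  ring_nf

lemma sub_one_mul_sum_range_natCast_mul_pow {K : Type*} [CommRing K] (z : K) (n : ℕ) :
    (z - 1) * ∑ x ∈ range n, (x : K) * z ^ x = n * z ^ n - z * ∑ x ∈ range n, z ^ x := by
  induction n with
  | zero => simp
  | succ n ih => rw [sum_range_succ, sum_range_succ, mul_add, ih]; push_cast; ring

lemma sum_range_natCast_mul_pow_of_pow_eq_one {K : Type*} [Field K] {z : K} {n : ℕ}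
    (hzn : z ^ n = 1) (hz : z ≠ 1) :
    ∑ x ∈ range n, (x : K) * z ^ x = n / (z - 1) := by
  have hz' : z - 1 ≠ 0 := sub_ne_zero.mpr hz
  have key := sub_one_mul_sum_range_natCast_mul_pow z n
  rw [geom_sum_eq hz, hzn, sub_self, zero_div, mul_zero, sub_zero, mul_one] at key
  rw [eq_div_iff hz', mul_comm, key]

lemma sum_range_natCast_mul_stdAddChar {b : ZMod N} (hb : b ≠ 0) :
    ∑ x ∈ range N, (x : ℂ) * ZMod.stdAddChar (b * (x : ZMod N))
      = N / (ZMod.stdAddChar b - 1) := by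
  simp_rw [stdAddChar_mul_natCast]
  refine sum_range_natCast_mul_pow_of_pow_eq_one ?_ ?_
  · rw [← stdAddChar_mul_natCast, ZMod.natCast_self, mul_zero, AddChar.map_zero_eq_one]
  · rwa [← AddChar.map_zero_eq_one (ZMod.stdAddChar (N := N)), ZMod.injective_stdAddChar.ne_iff]

lemma sum_stdAddChar_mul (c : ZMod N) :
    ∑ b : ZMod N, ZMod.stdAddChar (b * c) = if c = 0 then (N : ℂ) else 0 := by
  rw [AddChar.sum_mulShift c (ZMod.isPrimitive_stdAddChar N), ZMod.card]
  split_ifs <;> simp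

lemma sum_norm_sq_sum_range_mul_stdAddChar (f : ℕ → ℂ) :
    ∑ b : ZMod N, ‖∑ x ∈ range N, f x * ZMod.stdAddChar (b * (x : ZMod N))‖ ^ 2
      = N * ∑ x ∈ range N, ‖f x‖ ^ 2 := by
  apply Complex.ofReal_injective
  push_cast
  simp_rw [← Complex.mul_conj', map_sum, map_mul, ← AddChar.map_neg_eq_conj, sum_mul_sum,
    mul_sum]
  rw [sum_comm]
  refine sum_congr rfl fun x hx => ?_
  rw [sum_comm]
  have hterm : ∀ (y : ℕ) (b : ZMod N),
      ZMod.stdAddChar (b * (x : ZMod N)) * ZMod.stdAddChar (-(b * (y : ZMod N)))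
        = ZMod.stdAddChar (b * ((x : ZMod N) - (y : ZMod N))) := fun y b => by
    rw [← AddChar.map_add_eq_mul]
    ring_nf
  simp_rw [mul_mul_mul_comm _ (ZMod.stdAddChar _), hterm, ← mul_sum, sum_stdAddChar_mul]
  rw [sum_eq_single x]
  · simp [mul_comm]
  · intro y hy hyx
    rw [if_neg, mul_zero]
    rw [sub_eq_zero, ZMod.natCast_eq_natCast_iff', Nat.mod_eq_of_lt (mem_range.mp hx),
      Nat.mod_eq_of_lt (mem_range.mp hy)]
    exact Ne.symm hyx
  · exact fun h => absurd hx h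

theorem sum_inv_sin_sq :
    ∑ b ∈ univ.erase (0 : ZMod N), (sin (π * b.val / N) ^ 2)⁻¹ = ((N : ℝ) ^ 2 - 1) / 3 := by
  set F : ZMod N → ℂ := fun b => ∑ x ∈ range N, (x : ℂ) * ZMod.stdAddChar (b * (x : ZMod N))
  have hsums : ∀ n : ℕ, ∑ x ∈ range n, (x : ℝ) = n * (n - 1) / 2 ∧
      ∑ x ∈ range n, (x : ℝ) ^ 2 = n * (n - 1) * (2 * n - 1) / 6 := by
    intro n
    induction n with
    | zero => simp
    | succ n ih => simp only [sum_range_succ, ih.1, ih.2]; push_cast; constructor <;> ring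
  have hF0 : ‖F 0‖ ^ 2 = ((N : ℝ) * (N - 1) / 2) ^ 2 := by
    simp only [F, zero_mul, AddChar.map_zero_eq_one, mul_one]
    rw [show ∑ x ∈ range N, (x : ℂ) = ((∑ x ∈ range N, (x : ℝ) : ℝ) : ℂ) by push_cast; rfl,
      Complex.norm_real, Real.norm_of_nonneg (by positivity), (hsums N).1]
  have hF : ∀ b ∈ univ.erase (0 : ZMod N),
      ‖F b‖ ^ 2 = N ^ 2 / 4 * (sin (π * b.val / N) ^ 2)⁻¹ := by
    intro b hb
    rw [show F b = _ from sum_range_natCast_mul_stdAddChar (ne_of_mem_erase hb), norm_div, div_pow,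
      norm_stdAddChar_sub_one_sq, Complex.norm_natCast]
    ring
  have hparseval := sum_norm_sq_sum_range_mul_stdAddChar (N := N) (fun x => (x : ℂ))
  simp only [Complex.norm_natCast] at hparseval
  rw [← add_sum_erase univ _ (mem_univ 0), (hsums N).2] at hparseval
  change ‖F 0‖ ^ 2 + ∑ b ∈ univ.erase 0, ‖F b‖ ^ 2 = _ at hparseval
  rw [hF0, sum_congr rfl hF, ← mul_sum] at hparseval
  have hN : (N : ℝ) ≠ 0 := NeZero.ne _
  field_simp at hparseval
  simp only [one_div] at hparseval
  linear_combination hparseval / 24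

end CosecantSum

section Gset

variable {p : ℕ} [NeZero p]

lemma Gset_eq_image_degreeLTEquiv_symm (s : ℕ) :
    Gset p s = univ.image fun c => ((degreeLTEquiv (ZMod p) s).symm c : (ZMod p)[X]) := by
  simp [Gset, degreeLTEquiv, C_mul_X_pow_eq_monomial]

lemma mem_Gset {s : ℕ} {g : (ZMod p)[X]} : g ∈ Gset p s ↔ g.degree < s := by
  rw [Gset_eq_image_degreeLTEquiv_symm, ← mem_degreeLT, mem_image]
  exact ⟨fun ⟨c, _, hc⟩ => hc ▸ ((degreeLTEquiv (ZMod p) s).symm c).2,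
    fun hg => ⟨degreeLTEquiv (ZMod p) s ⟨g, hg⟩, mem_univ _, by simp⟩⟩

lemma sum_Gset {M : Type*} [AddCommMonoid M] (s : ℕ) (f : (ZMod p)[X] → M) :
    ∑ g ∈ Gset p s, f g = ∑ c : Fin s → ZMod p, f ((degreeLTEquiv (ZMod p) s).symm c) := by
  rw [Gset_eq_image_degreeLTEquiv_symm, sum_image fun c _ d _ h =>
    (degreeLTEquiv (ZMod p) s).symm.injective (Subtype.ext h)]

lemma card_Gset (s : ℕ) : #(Gset p s) = p ^ s := by
  rw [card_eq_sum_ones, sum_Gset]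
  simp

lemma Gset_zero : Gset p 0 = {0} := by
  ext g
  simp [mem_Gset, Polynomial.ext_iff]

lemma sum_Gset_stdAddChar (L : (ZMod p)[X] →+ ZMod p) (s : ℕ) :
    ∑ g ∈ Gset p s, ZMod.stdAddChar (L g)
      = if ∀ g ∈ Gset p s, L g = 0 then (p : ℂ) ^ s else 0 := by
  set e := (degreeLTEquiv (ZMod p) s).symm
  set ψ : AddChar (Fin s → ZMod p) ℂ := ZMod.stdAddChar.compAddMonoidHom
    (L.comp ((degreeLT (ZMod p) s).subtype.toAddMonoidHom.comp e.toAddMonoidHom))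
  have hψ : ψ = 0 ↔ ∀ g ∈ Gset p s, L g = 0 := by
    simp only [AddChar.eq_zero_iff, Gset_eq_image_degreeLTEquiv_symm, mem_image, mem_univ,
      true_and, forall_exists_index, forall_apply_eq_imp_iff]
    refine forall_congr' fun c => ?_
    rw [← AddChar.map_zero_eq_one (ZMod.stdAddChar (N := p))]
    exact ZMod.injective_stdAddChar.eq_iff
  rw [sum_Gset]
  convert AddChar.sum_eq_ite ψ using 1
  · rfl
  · simp [hψ]

lemma filter_X_pow_dvd_Gset (s r : ℕ) :
    (Gset p (s + r)).filter (X ^ r ∣ ·) = (Gset p s).image (X ^ r * ·) := by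
  ext h
  simp only [mem_filter, mem_image, mem_Gset, degree_lt_iff_coeff_zero]
  constructor
  · rintro ⟨hdeg, q, rfl⟩
    refine ⟨q, fun i hi => ?_, rfl⟩
    simpa [coeff_X_pow_mul] using hdeg (i + r) (by omega)
  · rintro ⟨q, hq, rfl⟩
    refine ⟨fun i hi => ?_, dvd_mul_right _ _⟩
    rw [coeff_X_pow_mul', if_pos (by omega), hq _ (by omega)]

lemma sum_filter_X_pow_dvd_Gset {M : Type*} [AddCommMonoid M] (s r : ℕ) (f : (ZMod p)[X] → M) :
    ∑ h ∈ (Gset p (s + r)).filter (X ^ r ∣ ·), f h = ∑ q ∈ Gset p s, f (X ^ r * q) := by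
  rw [filter_X_pow_dvd_Gset, sum_image fun _ _ _ _ h => (isRegular_X_pow r).left h]

lemma sum_Gset_succ {M : Type*} [AddCommMonoid M] (s : ℕ) (f : (ZMod p)[X] → M) :
    ∑ h ∈ Gset p (s + 1), f h = ∑ g ∈ Gset p s, ∑ a : ZMod p, f (g + C a * X ^ s) := by
  rw [← sum_product' (Gset p s) univ]
  refine sum_nbij' (fun h => (h - C (h.coeff s) * X ^ s, h.coeff s))
    (fun x => x.1 + C x.2 * X ^ s) ?_ ?_ ?_ ?_ ?_
  · intro h hh
    simp only [mem_product, mem_univ, and_true, mem_Gset, degree_lt_iff_coeff_zero] at hh ⊢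
    intro i hi
    rw [coeff_sub, coeff_C_mul_X_pow]
    rcases hi.eq_or_lt with rfl | hi
    · simp
    · simp [hh i hi, hi.ne']
  · rintro ⟨g, a⟩ hg
    simp only [mem_product, mem_univ, and_true, mem_Gset, degree_lt_iff_coeff_zero] at hg ⊢
    intro i hi
    rw [coeff_add, coeff_C_mul_X_pow, hg i (by omega), if_neg (by omega), add_zero]
  · intro h _
    simp
  · rintro ⟨g, a⟩ hg
    simp only [mem_product, mem_univ, and_true, mem_Gset, degree_lt_iff_coeff_zero] at hg
    simp [hg s le_rfl]
  · intro h _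
    simp

end Gset

-- A junk value: the defining formula divides by `sin 0 = 0`.
lemma rp_zero {p : ℕ} : rp p 0 = 0 := by
  simp [rp]

section WeightSums
variable {p : ℕ} [Fact p.Prime]

lemma rp_X_pow_mul (r : ℕ) (h : (ZMod p)[X]) : rp p (X ^ r * h) = rp p h / p ^ r := by
  rcases eq_or_ne h 0 with rfl | hh
  · simp [rp_zero]
  rw [rp, rp, natDegree_X_pow_mul r hh, mul_comm (X ^ r), leadingCoeff_mul_X_pow, div_div,
    pow_add]
  ring_nf

lemma rp_add_C_mul_X_pow {s : ℕ} {g : (ZMod p)[X]} (hg : g.degree < s) {a : ZMod p}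
    (ha : a ≠ 0) : rp p (g + C a * X ^ s) = ((p : ℝ) ^ (s + 1) * sin (π * a.val / p) ^ 2)⁻¹ := by
  have hlt : g.degree < (C a * X ^ s).degree := by rwa [degree_C_mul_X_pow s ha]
  rw [rp, natDegree_add_eq_right_of_degree_lt hlt, leadingCoeff_add_of_degree_lt hlt,
    natDegree_C_mul_X_pow s a ha, leadingCoeff_C_mul_X_pow, one_div]

theorem sum_Gset_rp (s : ℕ) : ∑ h ∈ Gset p s, rp p h = s * (((p : ℝ) ^ 2 - 1) / 3) / p := by
  induction s with
  | zero => simp [Gset_zero, rp_zero]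
  | succ s ih =>
    have hp : (p : ℝ) ≠ 0 := NeZero.ne _
    have hfiber : ∀ g ∈ Gset p s,
        ∑ a : ZMod p, rp p (g + C a * X ^ s) = rp p g + ((p : ℝ) ^ 2 - 1) / 3 / p ^ (s + 1) := by
      intro g hg
      rw [← add_sum_erase _ _ (mem_univ 0), map_zero, zero_mul, add_zero,
        sum_congr rfl fun a ha => rp_add_C_mul_X_pow (mem_Gset.mp hg) (ne_of_mem_erase ha)]
      simp_rw [mul_inv]
      rw [← mul_sum, sum_inv_sin_sq, div_eq_inv_mul _ ((p : ℝ) ^ (s + 1))]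
    rw [sum_Gset_succ, sum_congr rfl hfiber, sum_add_distrib, ih, sum_const, card_Gset,
      nsmul_eq_mul]
    push_cast
    field_simp
    ring

theorem sum_filter_X_pow_dvd_Gset_rp (s r : ℕ) :
    ∑ h ∈ (Gset p (s + r)).filter (X ^ r ∣ ·), rp p h
      = s * (((p : ℝ) ^ 2 - 1) / 3) / p ^ (r + 1) := by
  rw [sum_filter_X_pow_dvd_Gset]
  simp_rw [rp_X_pow_mul]
  rw [← sum_div, sum_Gset_rp, div_div, pow_succ' (p : ℝ) r]

end WeightSums

lemma forall_coeff_mul_X_pow_mul_eq_zero_iff {R : Type*} [CommSemiring R] (v : R[X]) (r t : ℕ) :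
    (∀ q : R[X], q.degree < r → (v * X ^ t * q).coeff (r + t - 1) = 0) ↔ X ^ r ∣ v := by
  constructor
  · intro H
    rw [X_pow_dvd_iff]
    intro i hi
    have hdeg : (X ^ (r - 1 - i) : R[X]).degree < r :=
      (degree_X_pow_le _).trans_lt (by exact_mod_cast (by omega : r - 1 - i < r))
    have := H _ hdeg
    rwa [mul_assoc, ← pow_add, show r + t - 1 = i + (t + (r - 1 - i)) by omega,
      coeff_mul_X_pow] at this
  · rintro ⟨w, rfl⟩ q hq
    rcases Nat.eq_zero_or_pos (r + t) with hrt | hrt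
    · obtain rfl : q = 0 := by simpa [show r = 0 by omega] using hq
      simp
    rw [show X ^ r * w * X ^ t * q = X ^ (r + t) * (w * q) by ring, coeff_X_pow_mul',
      if_neg (by omega)]

section CharacterSums
variable {p : ℕ} [Fact p.Prime]

lemma sum_Gset_stdAddChar_coeff (v : (ZMod p)[X]) (r t : ℕ) :
    ∑ q ∈ Gset p r, ZMod.stdAddChar ((v * X ^ t * q).coeff (r + t - 1))
      = if X ^ r ∣ v then (p : ℂ) ^ r else 0 := by
  have h := sum_Gset_stdAddChar ((lcoeff (ZMod p) (r + t - 1)).toAddMonoidHom.comp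
    (AddMonoidHom.mulLeft (v * X ^ t))) r
  simpa only [AddMonoidHom.comp_apply, AddMonoidHom.coe_mulLeft, LinearMap.toAddMonoidHom_coe,
    lcoeff_apply, mem_Gset, forall_coeff_mul_X_pow_mul_eq_zero_iff] using h

theorem sum_coprime_Gset_stdAddChar (v : (ZMod p)[X]) {n : ℕ} (hn : 0 < n) :
    ∑ g ∈ (Gset p n).filter (IsCoprime · X), ZMod.stdAddChar ((v * g).coeff (n - 1))
      = (if X ^ n ∣ v then (p : ℂ) ^ n else 0)
        - if X ^ (n - 1) ∣ v then (p : ℂ) ^ (n - 1) else 0 := by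
  obtain ⟨r, rfl⟩ : ∃ r, n = r + 1 := ⟨n - 1, by omega⟩
  have hcoprime : ∀ g : (ZMod p)[X], IsCoprime g X ↔ ¬ X ^ 1 ∣ g := fun g => by
    rw [isCoprime_comm, prime_X.coprime_iff_not_dvd, pow_one]
  have hall := sum_Gset_stdAddChar_coeff v (r + 1) 0
  have hdvd := sum_Gset_stdAddChar_coeff v r 1
  rw [← sum_filter_not_add_sum_filter _ (X ^ 1 ∣ ·), sum_filter_X_pow_dvd_Gset] at hall
  simp only [pow_zero, mul_one, add_zero, add_tsub_cancel_right, mul_assoc] at hall hdvd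
  rw [filter_congr fun g _ => hcoprime g, add_tsub_cancel_right, ← hdvd, ← hall,
    add_sub_cancel_right]

end CharacterSums

universe u

lemma RatFunc.eval_algebraMap_div_algebraMap {K L : Type u} [Field K] [Field L] (f : K →+* L)
    (a : L) {P Q : K[X]} (hQ : Q ≠ 0) (hQa : Q.eval₂ f a ≠ 0) :
    RatFunc.eval f a (algebraMap K[X] (RatFunc K) P / algebraMap K[X] (RatFunc K) Q)
      = P.eval₂ f a / Q.eval₂ f a := by
  set x := algebraMap K[X] (RatFunc K) P / algebraMap K[X] (RatFunc K) Q with hx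
  obtain ⟨R, hR⟩ : x.denom ∣ Q := (RatFunc.denom_dvd hQ).mpr ⟨P, hx⟩
  have hden : x.denom.eval₂ f a ≠ 0 := fun h => hQa (by rw [hR, eval₂_mul, h, zero_mul])
  have hcross : x.num * Q = P * x.denom := by
    apply RatFunc.algebraMap_injective K
    rw [map_mul, map_mul, ← div_eq_div_iff (RatFunc.algebraMap_ne_zero x.denom_ne_zero)
      (RatFunc.algebraMap_ne_zero hQ), RatFunc.num_div_denom]
  rw [RatFunc.eval, div_eq_div_iff hden hQa, ← eval₂_mul, ← eval₂_mul, hcross]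

lemma coeff_eval₂_single_neg_one {R : Type*} [CommRing R] (P : R[X]) (j : ℕ) :
    (P.eval₂ (HahnSeries.C : R →+* LaurentSeries R) (HahnSeries.single (-1) 1)).coeff (-j)
      = P.coeff j := by
  induction P using Polynomial.induction_on' with
  | add P Q hP hQ => rw [eval₂_add, HahnSeries.coeff_add, hP, hQ, coeff_add]
  | monomial n a =>
    rw [eval₂_monomial, HahnSeries.single_pow, HahnSeries.C_apply, HahnSeries.single_mul_single,
      HahnSeries.coeff_single, coeff_monomial]
    simp [eq_comm]

section Laurent
variable {p : ℕ} [Fact p.Prime]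

lemma coeff_laurentAtInfty_div_X_pow (P : (ZMod p)[X]) {n : ℕ} (hn : 0 < n) :
    (laurentAtInfty p (algebraMap (ZMod p)[X] (RatFunc (ZMod p)) P
      / algebraMap (ZMod p)[X] (RatFunc (ZMod p)) (X ^ n))).coeff 1 = P.coeff (n - 1) := by
  have heval : (X ^ n : (ZMod p)[X]).eval₂ (HahnSeries.C : ZMod p →+* LaurentSeries (ZMod p))
      (HahnSeries.single (-1) 1) = HahnSeries.single (-(n : ℤ)) 1 := by
    simp [HahnSeries.single_pow]
  have hinv : (HahnSeries.single (-(n : ℤ)) (1 : ZMod p))⁻¹ = HahnSeries.single (n : ℤ) 1 := by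
    rw [inv_eq_of_mul_eq_one_right]
    rw [HahnSeries.single_mul_single, neg_add_cancel, mul_one, HahnSeries.single_zero_one]
  rw [laurentAtInfty, RatFunc.eval_algebraMap_div_algebraMap _ _ (pow_ne_zero n X_ne_zero)
    (by simp [heval]), heval, div_eq_mul_inv, hinv]
  have key := HahnSeries.coeff_mul_single_add (r := (1 : ZMod p)) (b := (n : ℤ))
    (x := P.eval₂ HahnSeries.C (HahnSeries.single (-1) 1)) (a := -((n - 1 : ℕ) : ℤ))
  rwa [show -((n - 1 : ℕ) : ℤ) + n = 1 by push_cast [Nat.cast_sub hn]; ring, mul_one,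
    coeff_eval₂_single_neg_one] at key

lemma Xp_div_X_pow (P : (ZMod p)[X]) {n : ℕ} (hn : 0 < n) :
    Xp p (algebraMap (ZMod p)[X] (RatFunc (ZMod p)) P
      / algebraMap (ZMod p)[X] (RatFunc (ZMod p)) (X ^ n)) = ZMod.stdAddChar (P.coeff (n - 1)) := by
  rw [Xp, ZMod.stdAddChar_apply, ZMod.toCircle_apply, coeff_laurentAtInfty_div_X_pow P hn]

end Laurent

theorem Prime.pow_add_dvd_mul_iff {M : Type*} [CommMonoidWithZero M] [IsCancelMulZero M]
    {q a b : M} (hq : Prime q) {k : ℕ} (hk : q ^ k ∣ a) (hk1 : ¬ q ^ (k + 1) ∣ a) (r : ℕ) :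
    q ^ (k + r) ∣ a * b ↔ q ^ r ∣ b := by
  obtain ⟨u, rfl⟩ := hk
  have hu : ¬ q ∣ u := fun ⟨w, hw⟩ => hk1 ⟨w, by rw [hw, pow_succ, mul_assoc]⟩
  rw [pow_add, mul_assoc, mul_dvd_mul_iff_left (pow_ne_zero k hq.ne_zero)]
  exact ⟨hq.pow_dvd_of_dvd_mul_left r hu, fun h => h.mul_left u⟩

theorem Y_eq_general (p : ℕ) [Fact p.Prime] (m w k : ℕ) (hw : w < m)
    (ℓ : Polynomial (ZMod p))
    (hk : k ≤ m - w - 1)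
    (hdvd : (Polynomial.X : Polynomial (ZMod p)) ^ k ∣ ℓ)
    (hndvd : ¬ (Polynomial.X : Polynomial (ZMod p)) ^ (k + 1) ∣ ℓ) :
    ∑ g ∈ (Gset p (m - w)).filter (fun g => IsCoprime g (Polynomial.X : Polynomial (ZMod p))),
      ∑ h ∈ (Gset p m).filter (fun h => h ≠ 0),
        (rp p h : ℂ) *
          Xp p (algebraMap (Polynomial (ZMod p)) (RatFunc (ZMod p)) ℓ
            / algebraMap (Polynomial (ZMod p)) (RatFunc (ZMod p)) (Polynomial.X ^ (m - w))
            * algebraMap (Polynomial (ZMod p)) (RatFunc (ZMod p)) (h * g))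
      = -(((p : ℂ) ^ 2 - 1) / (3 * (p : ℂ))) * (p : ℂ) ^ k := by
  obtain ⟨j, hj⟩ : ∃ j, m - w = k + j + 1 := ⟨m - w - 1 - k, by omega⟩
  obtain ⟨s, rfl⟩ : ∃ s, m = s + (j + 1) := ⟨m - (j + 1), by omega⟩
  have hXp : ∀ h g : (ZMod p)[X],
      Xp p (algebraMap _ (RatFunc (ZMod p)) ℓ / algebraMap _ _ (X ^ (s + (j + 1) - w))
        * algebraMap _ _ (h * g)) = ZMod.stdAddChar ((ℓ * h * g).coeff (s + (j + 1) - w - 1)) :=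
    fun h g => by rw [div_mul_eq_mul_div, ← map_mul, ← mul_assoc, Xp_div_X_pow _ (by omega)]
  simp_rw [hXp]
  rw [sum_comm, sum_filter_of_ne fun h _ hh => by rintro rfl; simp [rp_zero] at hh]
  simp_rw [← mul_sum, sum_coprime_Gset_stdAddChar _ (show 0 < s + (j + 1) - w by omega), hj,
    Nat.add_sub_cancel, add_assoc, Prime.pow_add_dvd_mul_iff prime_X hdvd hndvd]
  simp_rw [mul_sub, mul_ite, mul_zero, sum_sub_distrib, ← sum_filter, ← sum_mul,
    ← Complex.ofReal_sum]
  rw [sum_filter_X_pow_dvd_Gset_rp, show s + (j + 1) = s + 1 + j by ring,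
    sum_filter_X_pow_dvd_Gset_rp]
  have hp : (p : ℂ) ≠ 0 := NeZero.ne _
  push_cast
  field_simp
  ring

theorem Y_eq (p : ℕ) [Fact p.Prime] (m w k : ℕ) (hw : w < m)
    (ℓ : Polynomial (ZMod p)) (hℓ0 : ℓ ≠ 0) (hℓdeg : ℓ.degree < ((m - w : ℕ) : WithBot ℕ))
    (hk : k ≤ m - w - 1)
    (hdvd : (Polynomial.X : Polynomial (ZMod p)) ^ k ∣ ℓ)
    (hndvd : ¬ (Polynomial.X : Polynomial (ZMod p)) ^ (k + 1) ∣ ℓ) :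
    ∑ g ∈ (Gset p (m - w)).filter (fun g => IsCoprime g (Polynomial.X : Polynomial (ZMod p))),
      ∑ h ∈ (Gset p m).filter (fun h => h ≠ 0),
        (rp p h : ℂ) *
          Xp p (algebraMap (Polynomial (ZMod p)) (RatFunc (ZMod p)) ℓ
            / algebraMap (Polynomial (ZMod p)) (RatFunc (ZMod p)) (Polynomial.X ^ (m - w))
            * algebraMap (Polynomial (ZMod p)) (RatFunc (ZMod p)) (h * g))
      = -(((p : ℂ) ^ 2 - 1) / (3 * (p : ℂ))) * (p : ℂ) ^ k :=
  Y_eq_general p m w k hw ℓ hk hdvd hndvd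
end

section
/- Let p be prime, m ≥ 1, s ≥ 1, f ∈ F_p[x] with deg f = m, g ∈ G_{p,m}^s, d ∈ [s-1], and product weights γ_i ∈ (0,1]. Then R^{d+1}_γ((g, g_{d+1}), f) = (1 + γ_{d+1}) R^d_γ(g, f) + θ(g_{d+1}), where θ(g_{d+1}) := Σ_{h_{d+1} ∈ G_{p,m}\{0}} r_p(h_{d+1}, γ_{d+1}) Σ_{h ∈ G_{p,m}^d, h·g ≡ -h_{d+1} g_{d+1} mod f} Π_{i=1}^d r_p(h_i, γ_i). -/
open Polynomial Finset
open scoped Classical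

/-- The quantity `R^d_γ(g,f)` for product weights `γ`. -/
noncomputable def Rq (p m : ℕ) [NeZero p] (d : ℕ) (f : Polynomial (ZMod p))
    (g : Fin d → Polynomial (ZMod p)) (γ : ℕ → ℝ) : ℝ :=
  ∑ h ∈ (Fintype.piFinset fun _ : Fin d => Gset p m).filter
      (fun h => h ≠ 0 ∧ f ∣ ∑ i, h i * g i),
    ∏ i, rpw p (h i) (γ (i : ℕ))

/-! Split the sum defining `R^{d+1}` according to the last coordinate `h_{d+1}` of `h`: the
terms with `h_{d+1} = 0` carry the factor `r_p(0, γ_{d+1}) = 1 + γ_{d+1}` and otherwise are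
exactly the terms of `R^d`, while the terms with `h_{d+1} ≠ 0` make up `θ(g_{d+1})`. -/

theorem Fin.snoc_eq_zero_iff {α : Type*} [Zero α] {n : ℕ} (h : Fin n → α) (a : α) :
    (Fin.snoc h a : Fin (n + 1) → α) = 0 ↔ h = 0 ∧ a = 0 := by
  simp only [funext_iff, Pi.zero_apply, Fin.forall_fin_succ', Fin.snoc_castSucc, Fin.snoc_last,
    and_comm]

theorem Fin.sum_snoc_mul_snoc {R : Type*} [NonUnitalNonAssocSemiring R] {n : ℕ}
    (h g : Fin n → R) (a b : R) :
    ∑ i, (Fin.snoc h a : Fin (n + 1) → R) i * (Fin.snoc g b : Fin (n + 1) → R) i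
      = ∑ i, h i * g i + a * b := by
  simp [Fin.sum_univ_castSucc]

theorem Finset.sum_piFinset_const_succ {β M : Type*} [AddCommMonoid M] {n : ℕ} (s : Finset β)
    (F : (Fin (n + 1) → β) → M) :
    ∑ h ∈ Fintype.piFinset (fun _ => s), F h
      = ∑ a ∈ s, ∑ h ∈ Fintype.piFinset (fun _ : Fin n => s), F (Fin.snoc h a) := by
  have hsplit := filter_piFinset_eq_map_snocEquiv (fun _ : Fin (n + 1) => s) (fun _ => True)
  simp only [filter_true] at hsplit
  rw [hsplit, sum_map, sum_product]
  rfl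

theorem zero_mem_Gset (p m : ℕ) [NeZero p] : (0 : (ZMod p)[X]) ∈ Gset p m :=
  mem_image.2 ⟨0, mem_univ _, by simp⟩

/-- Index `i : ℕ` of `γ` is the paper's `i + 1`, so `γ d` is the paper's `γ_{d+1}`. -/
theorem R_recursion_general (p : ℕ) [Fact p.Prime] (m : ℕ)
    (f : Polynomial (ZMod p))
    (d : ℕ)
    (g : Fin d → Polynomial (ZMod p))
    (γ : ℕ → ℝ)
    (gd1 : Polynomial (ZMod p)) :
    Rq p m (d + 1) f (Fin.snoc g gd1) γ
      = (1 + γ d) * Rq p m d f g γ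
        + ∑ h1 ∈ (Gset p m).filter (fun h => h ≠ 0),
            rpw p h1 (γ d) *
              ∑ h ∈ (Fintype.piFinset fun _ : Fin d => Gset p m).filter
                  (fun h => f ∣ (∑ i, h i * g i) + h1 * gd1),
                ∏ i, rpw p (h i) (γ (i : ℕ)) := by
  rw [Rq, Rq, sum_filter, sum_piFinset_const_succ, ← add_sum_erase _ _ (zero_mem_Gset p m),
    filter_ne', mul_sum, sum_filter]
  congr 1
  · refine sum_congr rfl fun h _ => ?_
    simp only [ne_eq, Fin.snoc_eq_zero_iff, Fin.sum_snoc_mul_snoc, Fin.prod_univ_castSucc,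
      Fin.snoc_castSucc, Fin.snoc_last, Fin.val_castSucc, Fin.val_last, zero_mul, add_zero,
      and_true]
    split_ifs <;> simp [rpw, mul_comm]
  · refine sum_congr rfl fun a ha => ?_
    rw [mul_sum, sum_filter]
    refine sum_congr rfl fun h _ => ?_
    simp only [ne_eq, Fin.snoc_eq_zero_iff, ne_of_mem_erase ha, and_false, not_false_eq_true,
      true_and, Fin.sum_snoc_mul_snoc, Fin.prod_univ_castSucc, Fin.snoc_castSucc, Fin.snoc_last,
      Fin.val_castSucc, Fin.val_last]
    split_ifs <;> ring

/-- Decomposition `R^{d+1}_γ((g, g_{d+1}), f) = (1+γ_{d+1}) R^d_γ(g,f) + θ(g_{d+1})`.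
(Indices are shifted: index `i : ℕ` corresponds to `i+1` in the paper, so `γ (d)` is the
paper's `γ_{d+1}`.) -/
theorem R_recursion (p : ℕ) [Fact p.Prime] (m s : ℕ) (hm : 1 ≤ m) (hs : 1 ≤ s)
    (f : Polynomial (ZMod p)) (hfdeg : f.degree = (m : ℕ))
    (d : ℕ) (hd1 : 1 ≤ d) (hd2 : d ≤ s - 1)
    (g : Fin d → Polynomial (ZMod p)) (hg : ∀ i, g i ∈ Gset p m)
    (γ : ℕ → ℝ) (hγ : ∀ i, γ i ∈ Set.Ioc (0 : ℝ) 1)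
    (gd1 : Polynomial (ZMod p)) :
    Rq p m (d + 1) f (Fin.snoc g gd1) γ
      = (1 + γ d) * Rq p m d f g γ
        + ∑ h1 ∈ (Gset p m).filter (fun h => h ≠ 0),
            rpw p h1 (γ d) *
              ∑ h ∈ (Fintype.piFinset fun _ : Fin d => Gset p m).filter
                  (fun h => f ∣ (∑ i, h i * g i) + h1 * gd1),
                ∏ i, rpw p (h i) (γ (i : ℕ)) :=
  R_recursion_general p m f d g γ gd1
end
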